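/- arXiv:0809.2947 — 2 statements merged into one kernel-verified Lean document; each statement's English description precedes it below -/
import Mathlib

section
/- A nonzero fractional ideal H of an integral domain D is ∗-invertible if and only if (A : H)^∗ = (A^∗ : H) = (AH⁻¹)^∗ for all nonzero fractional ideals A of D. -/
/-!
Compatibility of `∗` with principal ideals gives `A^∗ B ⊆ (AB)^∗`. Hence, for every `H`,
`A H⁻¹ ⊆ (A : H)` and `(A : H)^∗ H ⊆ ((A : H) H)^∗ ⊆ A^∗`, so
`(AH⁻¹)^∗ ⊆ (A : H)^∗ ⊆ (A^∗ : H)`. When `(HH⁻¹)^∗ = D` the cycle closes: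
`(A^∗ : H) ⊆ ((A^∗ : H) H H⁻¹)^∗ ⊆ (A^∗ H⁻¹)^∗ = (AH⁻¹)^∗`.
Conversely, `A = H` gives `D ⊆ (H : H)^∗ = (HH⁻¹)^∗ ⊆ D`.
-/

open FractionalIdeal

/-- A star operation on an integral domain `D` with fraction field `K`, acting on
fractional ideals: it fixes `D`, is extensive, monotone, idempotent (all on nonzero
ideals), and commutes with multiplication by nonzero principal fractional ideals. -/
structure StarOp (D : Type*) [CommRing D] [IsDomain D] (K : Type*) [Field K]
    [Algebra D K] [IsFractionRing D K] where
  star : FractionalIdeal (nonZeroDivisors D) K → FractionalIdeal (nonZeroDivisors D) K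
  star_one : star 1 = 1
  le_star : ∀ {A}, A ≠ 0 → A ≤ star A
  star_mono : ∀ {A B}, A ≠ 0 → A ≤ B → star A ≤ star B
  star_idem : ∀ {A}, A ≠ 0 → star (star A) = star A
  star_smul : ∀ {A : FractionalIdeal (nonZeroDivisors D) K} (x : K), x ≠ 0 → A ≠ 0 →
    star (spanSingleton (nonZeroDivisors D) x * A) = spanSingleton (nonZeroDivisors D) x * star A

variable {D K : Type*} [CommRing D] [IsDomain D] [Field K] [Algebra D K] [IsFractionRing D K]

namespace FractionalIdeal

variable {R P : Type*} [CommRing R] {S : Submonoid R} [CommRing P] [Algebra R P]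

instance [NoZeroDivisors P] : NoZeroDivisors (FractionalIdeal S P) where
  eq_zero_or_eq_zero_of_mul_eq_zero {I J} h := by
    simpa only [← coeToSubmodule_inj, coe_mul, coe_zero, Submodule.zero_eq_bot,
      Submodule.mul_eq_bot] using h

variable {A H : FractionalIdeal (nonZeroDivisors D) K}

/-- `a · den H` lies in `A / H` for any nonzero `a ∈ A ∩ D`. -/
theorem div_ne_zero (hA : A ≠ 0) (hH : H ≠ 0) : A / H ≠ 0 := by
  obtain ⟨a, ha0, haA⟩ := exists_ne_zero_mem_isInteger hA
  have hc0 : algebraMap D K a * algebraMap D K H.den ≠ 0 :=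
    mul_ne_zero (IsFractionRing.to_map_ne_zero_of_mem_nonZeroDivisors
      (mem_nonZeroDivisors_of_ne_zero ha0))
      (IsFractionRing.to_map_ne_zero_of_mem_nonZeroDivisors H.den.2)
  have hc : spanSingleton _ (algebraMap D K a * algebraMap D K H.den) ≤ A / H := by
    rw [le_div_iff_mul_le hH, ← spanSingleton_mul_spanSingleton, mul_assoc,
      den_mul_self_eq_num']
    calc spanSingleton _ (algebraMap D K a) * (H.num : FractionalIdeal _ K)
        ≤ spanSingleton _ (algebraMap D K a) * 1 := mul_le_mul_right coeIdeal_le_one _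
      _ ≤ A := by rwa [mul_one, spanSingleton_le_iff_mem]
  intro h
  rw [h, le_zero_iff, spanSingleton_eq_zero_iff] at hc
  exact hc0 hc

theorem inv_ne_zero (hH : H ≠ 0) : H⁻¹ ≠ 0 := by
  rw [inv_eq]
  exact div_ne_zero one_ne_zero hH

theorem div_mul_le (hH : H ≠ 0) : A / H * H ≤ A :=
  (le_div_iff_mul_le hH).mp le_rfl

theorem mul_inv_le_div (A H : FractionalIdeal (nonZeroDivisors D) K) : A * H⁻¹ ≤ A / H := by
  rcases eq_or_ne H 0 with rfl | hH
  · rw [inv_zero', mul_zero]; exact zero_le _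
  rw [le_div_iff_mul_le hH, mul_assoc, mul_comm H⁻¹, inv_eq]
  exact (mul_le_mul_right mul_one_div_le_one A).trans (mul_one A).le

end FractionalIdeal

namespace StarOp

variable (s : StarOp D K) {A B J H : FractionalIdeal (nonZeroDivisors D) K}

theorem star_ne_zero (hA : A ≠ 0) : s.star A ≠ 0 :=
  fun h => hA (FractionalIdeal.le_zero_iff.mp (h ▸ s.le_star hA))

theorem star_mul_le_star_mul (hA : A ≠ 0) : s.star A * B ≤ s.star (A * B) := by
  refine mul_le.mpr fun a ha b hb => ?_
  rcases eq_or_ne b 0 with rfl | hb0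
  · simpa only [mul_zero] using FractionalIdeal.zero_mem _
  have hbA : spanSingleton _ b * A ≤ A * B := by
    rw [mul_comm A B]
    exact mul_le_mul_left (spanSingleton_le_iff_mem.mpr hb) A
  have hab : a * b ∈ s.star (spanSingleton _ b * A) := by
    rw [s.star_smul b hb0 hA]
    exact mem_singleton_mul.mpr ⟨a, ha, mul_comm a b⟩
  exact s.star_mono (mul_ne_zero (spanSingleton_ne_zero_iff.mpr hb0) hA) hbA hab

theorem star_div_le (hA : A ≠ 0) (hH : H ≠ 0) : s.star (A / H) ≤ s.star A / H := by
  have hAH := div_ne_zero hA hH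
  rw [le_div_iff_mul_le hH]
  calc s.star (A / H) * H ≤ s.star (A / H * H) := s.star_mul_le_star_mul hAH
    _ ≤ s.star A := s.star_mono (mul_ne_zero hAH hH) (div_mul_le hH)

theorem le_star_mul_of_star_eq_one (hJ : J ≠ 0) (h : s.star J = 1) :
    B ≤ s.star (B * J) :=
  calc B = s.star J * B := by rw [h, one_mul]
    _ ≤ s.star (J * B) := s.star_mul_le_star_mul hJ
    _ = s.star (B * J) := by rw [mul_comm]

theorem div_le_star_mul_inv (hinv : s.star (H * H⁻¹) = 1) (hA : A ≠ 0) (hH : H ≠ 0) :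
    s.star A / H ≤ s.star (A * H⁻¹) := by
  have hHinv : H⁻¹ ≠ 0 := inv_ne_zero hH
  have hX : s.star A / H ≠ 0 := div_ne_zero (s.star_ne_zero hA) hH
  calc s.star A / H ≤ s.star (s.star A / H * (H * H⁻¹)) :=
        s.le_star_mul_of_star_eq_one (mul_ne_zero hH hHinv) hinv
    _ ≤ s.star (s.star A * H⁻¹) := by
        refine s.star_mono (mul_ne_zero hX (mul_ne_zero hH hHinv)) ?_
        rw [← mul_assoc]
        exact mul_le_mul_left (div_mul_le hH) _
    _ ≤ s.star (s.star (A * H⁻¹)) :=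
        s.star_mono (mul_ne_zero (s.star_ne_zero hA) hHinv) (s.star_mul_le_star_mul hA)
    _ = s.star (A * H⁻¹) := s.star_idem (mul_ne_zero hA hHinv)

end StarOp

/-- A nonzero fractional ideal `H` is `∗`-invertible iff
`(A : H)^∗ = (A^∗ : H) = (AH⁻¹)^∗` for all nonzero fractional ideals `A`. -/
theorem starInvertible_iff_colon (s : StarOp D K) (H : FractionalIdeal (nonZeroDivisors D) K) (hH : H ≠ 0) :
    s.star (H * H⁻¹) = 1 ↔
    (∀ A : FractionalIdeal (nonZeroDivisors D) K, A ≠ 0 →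
      s.star (A / H) = s.star A / H ∧ s.star A / H = s.star (A * H⁻¹)) := by
  have hHinv : H⁻¹ ≠ 0 := inv_ne_zero hH
  constructor
  · intro hinv A hA
    have h₁ : s.star (A * H⁻¹) ≤ s.star (A / H) :=
      s.star_mono (mul_ne_zero hA hHinv) (mul_inv_le_div A H)
    have h₂ := s.star_div_le hA hH
    have h₃ := s.div_le_star_mul_inv hinv hA hH
    exact ⟨le_antisymm h₂ (h₃.trans h₁), le_antisymm h₃ (h₁.trans h₂)⟩
  · intro h
    obtain ⟨h₁, h₂⟩ := h H hH
    apply le_antisymm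
    · calc s.star (H * H⁻¹) ≤ s.star 1 :=
            s.star_mono (mul_ne_zero hH hHinv) (by rw [inv_eq]; exact mul_one_div_le_one)
        _ = 1 := s.star_one
    · calc 1 = s.star 1 := s.star_one.symm
        _ ≤ s.star (H / H) := s.star_mono one_ne_zero (by rw [le_div_iff_mul_le hH, one_mul])
        _ = s.star (H * H⁻¹) := h₁.trans h₂
end

section
/- If D is a ∗-Prüfer domain, then (AF)⁻¹ = (A⁻¹F⁻¹)^∗ for every nonzero fractional ideal A and every nonzero finitely generated fractional ideal F; moreover this latter property holds if and only if D is a (∗,v)-Prüfer domain. -/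
/-!
The divisorial ideal `(AF)⁻¹` is `∗`-closed and contains `A⁻¹F⁻¹`, which gives one inclusion.
For the other, `(AF)⁻¹ F^v ⊆ A⁻¹`, so if `(F^v F⁻¹)^∗ = D` then
`(AF)⁻¹ = (AF)⁻¹ (F^v F⁻¹)^∗ ⊆ ((AF)⁻¹ F^v F⁻¹)^∗ ⊆ (A⁻¹F⁻¹)^∗`.
Conversely, the formula for `A = F⁻¹` reads `(F^v F⁻¹)^∗ = (F⁻¹F)⁻¹ ⊇ D`, and `(F^v F⁻¹)^∗ ⊆ D`
always holds. Finally `FF⁻¹ ⊆ F^v F⁻¹ ⊆ D`, so `∗`-Prüfer implies `(∗,v)`-Prüfer.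
-/

open FractionalIdeal

variable {D K : Type*} [CommRing D] [IsDomain D] [Field K] [Algebra D K] [IsFractionRing D K]

open scoped nonZeroDivisors

namespace FractionalIdeal

instance {R P : Type*} [CommRing R] {S : Submonoid R} [CommRing P] [Algebra R P]
    [NoZeroDivisors P] : NoZeroDivisors (FractionalIdeal S P) where
  eq_zero_or_eq_zero_of_mul_eq_zero {I J} hIJ := by
    by_contra! h
    obtain ⟨x, hxI, hx⟩ := not_forall₂.mp (mt eq_zero_iff.mpr h.1)
    obtain ⟨y, hyJ, hy⟩ := not_forall₂.mp (mt eq_zero_iff.mpr h.2)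
    exact mul_ne_zero hx hy (eq_zero_iff.mp hIJ _ (mul_mem_mul hxI hyJ))

variable {I J : FractionalIdeal D⁰ K}

protected theorem inv_ne_zero_s15 (hI : I ≠ 0) : I⁻¹ ≠ 0 := fun h =>
  IsFractionRing.to_map_ne_zero_of_mem_nonZeroDivisors I.den.2
    (eq_zero_iff.mp h _ (den_mem_inv hI))

theorem le_inv_iff_mul_le (hJ : J ≠ 0) : I ≤ J⁻¹ ↔ I * J ≤ 1 := by
  rw [inv_eq, le_div_iff_mul_le hJ]

protected theorem mul_inv_le_one (I : FractionalIdeal D⁰ K) : I * I⁻¹ ≤ 1 :=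
  mul_one_div_le_one

protected theorem inv_mul_le_one (I : FractionalIdeal D⁰ K) : I⁻¹ * I ≤ 1 :=
  mul_comm I I⁻¹ ▸ FractionalIdeal.mul_inv_le_one I

theorem le_inv_inv (I : FractionalIdeal D⁰ K) : I ≤ I⁻¹⁻¹ := by
  rcases eq_or_ne I 0 with rfl | hI
  · exact zero_le _
  rw [le_inv_iff_mul_le (FractionalIdeal.inv_ne_zero_s15 hI)]
  exact FractionalIdeal.mul_inv_le_one I

theorem one_le_inv (hI : I ≠ 0) (h : I ≤ 1) : 1 ≤ I⁻¹ :=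
  (le_inv_iff_mul_le hI).mpr (by rwa [one_mul])

theorem inv_mul_inv_le_inv_mul (hI : I ≠ 0) (hJ : J ≠ 0) : I⁻¹ * J⁻¹ ≤ (I * J)⁻¹ := by
  rw [le_inv_iff_mul_le (mul_ne_zero hI hJ), mul_mul_mul_comm, mul_comm I⁻¹, mul_comm J⁻¹]
  exact mul_le_one' (FractionalIdeal.mul_inv_le_one I) (FractionalIdeal.mul_inv_le_one J)

theorem inv_mul_mul_inv_inv_le_inv (hI : I ≠ 0) (hJ : J ≠ 0) : (I * J)⁻¹ * J⁻¹⁻¹ ≤ I⁻¹ := by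
  have hIJ : (I * J)⁻¹ * I ≤ J⁻¹ := by
    rw [le_inv_iff_mul_le hJ, mul_assoc, mul_comm]
    exact FractionalIdeal.mul_inv_le_one (I * J)
  rw [le_inv_iff_mul_le hI, mul_right_comm]
  calc (I * J)⁻¹ * I * J⁻¹⁻¹ ≤ J⁻¹ * J⁻¹⁻¹ := mul_le_mul_left hIJ _
    _ ≤ 1 := FractionalIdeal.mul_inv_le_one J⁻¹

end FractionalIdeal

namespace StarOp

variable (s : StarOp D K) {A B F : FractionalIdeal D⁰ K}

theorem mul_star_le (hB : B ≠ 0) : A * s.star B ≤ s.star (A * B) := by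
  refine mul_le.mpr fun a ha b hb => ?_
  rcases eq_or_ne a 0 with rfl | ha0
  · simpa using zero_mem (s.star (A * B))
  have haB : spanSingleton D⁰ a * B ≤ A * B := mul_le_mul_left (spanSingleton_le_iff_mem.mpr ha) B
  have hab : a * b ∈ s.star (spanSingleton D⁰ a * B) := by
    rw [s.star_smul a ha0 hB]
    exact mul_mem_mul (mem_spanSingleton_self _ a) hb
  exact s.star_mono (mul_ne_zero (spanSingleton_ne_zero_iff.mpr ha0) hB) haB hab

theorem star_le_one (hA : A ≠ 0) (h : A ≤ 1) : s.star A ≤ 1 :=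
  s.star_one ▸ s.star_mono hA h

theorem star_inv (hA : A ≠ 0) : s.star A⁻¹ = A⁻¹ := by
  have hAi := FractionalIdeal.inv_ne_zero_s15 hA
  refine le_antisymm ?_ (s.le_star hAi)
  rw [le_inv_iff_mul_le hA, mul_comm]
  exact (s.mul_star_le hAi).trans
    (s.star_le_one (mul_ne_zero hA hAi) (FractionalIdeal.mul_inv_le_one A))

theorem star_inv_inv_mul_inv_le_one (hF : F ≠ 0) : s.star (F⁻¹⁻¹ * F⁻¹) ≤ 1 := by
  have hFi := FractionalIdeal.inv_ne_zero_s15 hF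
  exact s.star_le_one (mul_ne_zero (FractionalIdeal.inv_ne_zero_s15 hFi) hFi)
    (FractionalIdeal.inv_mul_le_one F⁻¹)

theorem star_inv_inv_mul_inv_eq_one_of_star_mul_inv_eq_one (hF : F ≠ 0)
    (h : s.star (F * F⁻¹) = 1) : s.star (F⁻¹⁻¹ * F⁻¹) = 1 :=
  (s.star_inv_inv_mul_inv_le_one hF).antisymm <| h ▸
    s.star_mono (mul_ne_zero hF (FractionalIdeal.inv_ne_zero_s15 hF)) (mul_le_mul_left (le_inv_inv F) F⁻¹)

theorem inv_mul_eq_star_inv_mul_inv (hA : A ≠ 0) (hF : F ≠ 0)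
    (hv : s.star (F⁻¹⁻¹ * F⁻¹) = 1) : (A * F)⁻¹ = s.star (A⁻¹ * F⁻¹) := by
  have hAF := mul_ne_zero hA hF
  have hAFi := FractionalIdeal.inv_ne_zero_s15 hAF
  have hFi := FractionalIdeal.inv_ne_zero_s15 hF
  have hFii := FractionalIdeal.inv_ne_zero_s15 hFi
  refine le_antisymm ?_ ?_
  · calc (A * F)⁻¹ = (A * F)⁻¹ * s.star (F⁻¹⁻¹ * F⁻¹) := by rw [hv, mul_one]
      _ ≤ s.star ((A * F)⁻¹ * F⁻¹⁻¹ * F⁻¹) := by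
        rw [mul_assoc]
        exact s.mul_star_le (mul_ne_zero hFii hFi)
      _ ≤ s.star (A⁻¹ * F⁻¹) :=
        s.star_mono (mul_ne_zero (mul_ne_zero hAFi hFii) hFi)
          (mul_le_mul_left (inv_mul_mul_inv_inv_le_inv hA hF) F⁻¹)
  · calc s.star (A⁻¹ * F⁻¹) ≤ s.star (A * F)⁻¹ :=
          s.star_mono (mul_ne_zero (FractionalIdeal.inv_ne_zero_s15 hA) hFi)
            (inv_mul_inv_le_inv_mul hA hF)
      _ = (A * F)⁻¹ := s.star_inv hAF

theorem star_inv_inv_mul_inv_eq_one_of_inv_mul_eq (hF : F ≠ 0)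
    (h : (F⁻¹ * F)⁻¹ = s.star (F⁻¹⁻¹ * F⁻¹)) : s.star (F⁻¹⁻¹ * F⁻¹) = 1 :=
  (s.star_inv_inv_mul_inv_le_one hF).antisymm <| h ▸
    one_le_inv (mul_ne_zero (FractionalIdeal.inv_ne_zero_s15 hF) hF) (FractionalIdeal.inv_mul_le_one F)

end StarOp

/-- If `D` is `∗`-Prüfer then `(AF)⁻¹ = (A⁻¹F⁻¹)^∗` for all nonzero `A` and
nonzero finitely generated `F`; moreover this property holds iff `D` is a
`(∗,v)`-Prüfer domain. -/
theorem starPrufer_implies_inv_mul_and_iff_starVPrufer (s : StarOp D K) :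
    ((∀ F : FractionalIdeal (nonZeroDivisors D) K, F ≠ 0 → (F : Submodule D K).FG → s.star (F * F⁻¹) = 1) →
      (∀ (A F : FractionalIdeal (nonZeroDivisors D) K), A ≠ 0 → F ≠ 0 → (F : Submodule D K).FG →
        (A * F)⁻¹ = s.star (A⁻¹ * F⁻¹))) ∧
    ((∀ (A F : FractionalIdeal (nonZeroDivisors D) K), A ≠ 0 → F ≠ 0 → (F : Submodule D K).FG →
        (A * F)⁻¹ = s.star (A⁻¹ * F⁻¹)) ↔
      (∀ F : FractionalIdeal (nonZeroDivisors D) K, F ≠ 0 → (F : Submodule D K).FG →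
        s.star ((F⁻¹)⁻¹ * F⁻¹) = 1)) := by
  refine ⟨fun hPrufer A F hA hF hFG => ?_, fun hInv F hF hFG => ?_, fun hvPrufer A F hA hF hFG => ?_⟩
  · exact s.inv_mul_eq_star_inv_mul_inv hA hF
      (s.star_inv_inv_mul_inv_eq_one_of_star_mul_inv_eq_one hF (hPrufer F hF hFG))
  · exact s.star_inv_inv_mul_inv_eq_one_of_inv_mul_eq hF
      (hInv F⁻¹ F (FractionalIdeal.inv_ne_zero_s15 hF) hF hFG)
  · exact s.inv_mul_eq_star_inv_mul_inv hA hF (hvPrufer F hF hFG)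
end
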